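/- arXiv:2604.11268 — 3 statements merged into one kernel-verified Lean document; each statement's English description precedes it below -/
import Mathlib

section
/- With the aggregated K-power system matrices A, N, B, C as in the context, for every integer i ≥ 1 with i ≠ k and all s₁, …, s_i ∈ ℂ such that each s_l I − A is invertible (equivalently, each s_l I − A_j is invertible for all j), the i-th multivariable transfer function vanishes: H_i(s₁, …, s_i) := C (s_i I − A)⁻¹ N (s_{i−1} I − A)⁻¹ N ⋯ N (s₁ I − A)⁻¹ B = 0 (a product containing i resolvents of A interlaced with i − 1 copies of N). -/
/-!
Weight the `j`-th block of the state space by `2 ^ (j + 1)`, i.e. conjugate by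
`T = blockdiag(2 I, 4 I, …, 2 ^ k I)`. Then `T` commutes with `A` and hence with every resolvent
of `A`, while `T N = 2 N T` because `N` raises the block index by one; so moving `T` through the
chain gives `T R = 2 ^ (i - 1) R T`. Since `T B = 2 B` and `C T = 2 ^ k C`, evaluating
`C T R B` both ways yields `2 ^ k H_i = 2 ^ i H_i`, which forces `H_i = 0` when `i ≠ k`.
-/

open Matrix

/-- The aggregated block-diagonal matrix `A = blockdiag(A₀, …, A_{k-1})` of a K-power
bilinear system (indices are 0-based: subsystem `j` has dimension `n j`). -/
def aggBlockDiag {α : Type*} [Zero α] (k : ℕ) (n : ℕ → ℕ)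
    (A : (j : ℕ) → Matrix (Fin (n j)) (Fin (n j)) α) :
    Matrix ((j : Fin k) × Fin (n j)) ((j : Fin k) × Fin (n j)) α :=
  fun p q =>
    if h : (p.1 : ℕ) = (q.1 : ℕ) then A (p.1 : ℕ) p.2 (Fin.cast (congrArg n h.symm) q.2) else 0

/-- The aggregated block-subdiagonal matrix `N` whose only nonzero blocks are
`N j` placed in block position `(j+1, j)`. -/
def aggSubDiag {α : Type*} [Zero α] (k : ℕ) (n : ℕ → ℕ)
    (N : (j : ℕ) → Matrix (Fin (n (j + 1))) (Fin (n j)) α) :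
    Matrix ((j : Fin k) × Fin (n j)) ((j : Fin k) × Fin (n j)) α :=
  fun p q =>
    if h : (p.1 : ℕ) = (q.1 : ℕ) + 1 then N (q.1 : ℕ) (Fin.cast (congrArg n h) p.2) q.2 else 0

/-- The aggregated input vector `B` whose first block is `B₁` and all other blocks are zero. -/
def aggB {α : Type*} [Zero α] (k : ℕ) (n : ℕ → ℕ) (B1 : Fin (n 0) → α) :
    ((j : Fin k) × Fin (n j)) → α :=
  fun p => if h : (p.1 : ℕ) = 0 then B1 (Fin.cast (congrArg n h) p.2) else 0

/-- The aggregated output vector `C` whose last block is `C_k` and all other blocks are zero. -/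
def aggC {α : Type*} [Zero α] (k : ℕ) (n : ℕ → ℕ) (Ck : Fin (n (k - 1)) → α) :
    ((j : Fin k) × Fin (n j)) → α :=
  fun p => if h : (p.1 : ℕ) = k - 1 then Ck (Fin.cast (congrArg n h) p.2) else 0

/-- `resolventChain A N m s = (s_m I − A)⁻¹ N (s_{m-1} I − A)⁻¹ N ⋯ N (s₀ I − A)⁻¹`, a product
of `m + 1` resolvents of `A` interlaced with `m` copies of `N`. -/
noncomputable def resolventChain {ι : Type*} [Fintype ι] [DecidableEq ι]
    (A N : Matrix ι ι ℂ) : (m : ℕ) → (Fin (m + 1) → ℂ) → Matrix ι ι ℂ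
  | 0, s => (s 0 • (1 : Matrix ι ι ℂ) - A)⁻¹
  | m + 1, s =>
      (s (Fin.last (m + 1)) • (1 : Matrix ι ι ℂ) - A)⁻¹ * N *
        resolventChain A N m (fun l => s l.castSucc)

theorem Commute.nonsing_inv_right {ι R : Type*} [Fintype ι] [DecidableEq ι] [CommRing R]
    {T M : Matrix ι ι R} (h : Commute T M) : Commute T M⁻¹ := by
  by_cases hM : IsUnit M
  · rw [← hM.unit_spec, ← Matrix.coe_units_inv]
    exact h.units_inv_right
  · rw [Matrix.nonsing_inv_eq_ringInverse, Ring.inverse_non_unit _ hM]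
    exact Commute.zero_right T

theorem Matrix.dotProduct_mulVec_eq_zero_of_scaling {ι R : Type*} [Fintype ι] [CommRing R]
    [NoZeroDivisors R] {C B : ι → R} {M T : Matrix ι ι R} {a b c : R}
    (hC : C ᵥ* T = a • C) (hB : T *ᵥ B = b • B) (hM : T * M = c • (M * T)) (habc : a ≠ c * b) :
    C ⬝ᵥ M *ᵥ B = 0 := by
  have h : a * (C ⬝ᵥ M *ᵥ B) = c * b * (C ⬝ᵥ M *ᵥ B) :=
    calc a * (C ⬝ᵥ M *ᵥ B) = C ⬝ᵥ (T * M) *ᵥ B := by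
          rw [← mulVec_mulVec, dotProduct_mulVec C T, hC, smul_dotProduct, smul_eq_mul]
      _ = c * b * (C ⬝ᵥ M *ᵥ B) := by
          rw [hM, smul_mulVec, ← mulVec_mulVec, hB, mulVec_smul, dotProduct_smul,
            dotProduct_smul, smul_eq_mul, smul_eq_mul, mul_assoc]
  have h' : (a - c * b) * (C ⬝ᵥ M *ᵥ B) = 0 := by rw [sub_mul, h, sub_self]
  exact (mul_eq_zero.1 h').resolve_left (sub_ne_zero.2 habc)

theorem mul_resolventChain {ι : Type*} [Fintype ι] [DecidableEq ι] {A N T : Matrix ι ι ℂ}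
    {c : ℂ} (hA : Commute T A) (hN : T * N = c • (N * T)) (m : ℕ) (s : Fin (m + 1) → ℂ) :
    T * resolventChain A N m s = c ^ m • (resolventChain A N m s * T) := by
  have hres : ∀ z : ℂ, Commute T (z • 1 - A)⁻¹ := fun z =>
    (((Commute.one_right T).smul_right z).sub_right hA).nonsing_inv_right
  induction m with
  | zero => simpa [resolventChain] using (hres (s 0)).eq
  | succ m ih =>
    simp only [resolventChain, Matrix.mul_assoc]
    rw [← Matrix.mul_assoc T, (hres _).eq, Matrix.mul_assoc, ← Matrix.mul_assoc T, hN,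
      Matrix.smul_mul, Matrix.mul_assoc, ih, pow_succ', mul_smul]
    simp only [Matrix.mul_smul]

def blockWeight {R : Type*} [CommSemiring R]
    (k : ℕ) (n : ℕ → ℕ) (c : R) :
    Matrix ((j : Fin k) × Fin (n j)) ((j : Fin k) × Fin (n j)) R :=
  diagonal fun p => c ^ ((p.1 : ℕ) + 1)

section Aggregated

variable {k : ℕ} {n : ℕ → ℕ}

theorem aggBlockDiag_map {α β : Type*} [Zero α] [Zero β]
    (A : (j : ℕ) → Matrix (Fin (n j)) (Fin (n j)) α) {f : α → β} (hf : f 0 = 0) :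
    (aggBlockDiag k n A).map f = aggBlockDiag k n fun j => (A j).map f := by
  ext p q
  simp only [map_apply, aggBlockDiag]
  split_ifs <;> simp [hf]

theorem aggSubDiag_map {α β : Type*} [Zero α] [Zero β]
    (N : (j : ℕ) → Matrix (Fin (n (j + 1))) (Fin (n j)) α) {f : α → β} (hf : f 0 = 0) :
    (aggSubDiag k n N).map f = aggSubDiag k n fun j => (N j).map f := by
  ext p q
  simp only [map_apply, aggSubDiag]
  split_ifs <;> simp [hf]

theorem aggB_map {α β : Type*} [Zero α] [Zero β] (B1 : Fin (n 0) → α) {f : α → β}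
    (hf : f 0 = 0) : (fun p => f (aggB k n B1 p)) = aggB k n (f ∘ B1) := by
  ext p
  simp only [aggB]
  split_ifs <;> simp [hf]

theorem aggC_map {α β : Type*} [Zero α] [Zero β] (Ck : Fin (n (k - 1)) → α) {f : α → β}
    (hf : f 0 = 0) : (fun p => f (aggC k n Ck p)) = aggC k n (f ∘ Ck) := by
  ext p
  simp only [aggC]
  split_ifs <;> simp [hf]

variable {R : Type*} [CommSemiring R]

theorem commute_blockWeight_aggBlockDiag (c : R)
    (A : (j : ℕ) → Matrix (Fin (n j)) (Fin (n j)) R) :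
    Commute (blockWeight k n c) (aggBlockDiag k n A) := by
  ext p q
  simp only [blockWeight, diagonal_mul, mul_diagonal, aggBlockDiag]
  split_ifs with h
  · rw [show c ^ ((p.1 : ℕ) + 1) = c ^ ((q.1 : ℕ) + 1) by rw [h], mul_comm]
  · simp

theorem blockWeight_mul_aggSubDiag (c : R)
    (N : (j : ℕ) → Matrix (Fin (n (j + 1))) (Fin (n j)) R) :
    blockWeight k n c * aggSubDiag k n N = c • (aggSubDiag k n N * blockWeight k n c) := by
  ext p q
  simp only [blockWeight, diagonal_mul, Matrix.smul_apply, mul_diagonal, aggSubDiag, smul_eq_mul]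
  split_ifs with h
  · rw [show c ^ ((p.1 : ℕ) + 1) = c ^ ((q.1 : ℕ) + 1 + 1) by rw [h]]
    ring
  · simp

theorem blockWeight_mulVec_aggB (c : R) (B1 : Fin (n 0) → R) :
    blockWeight k n c *ᵥ aggB k n B1 = c • aggB k n B1 := by
  ext p
  simp only [blockWeight, mulVec_diagonal, aggB, Pi.smul_apply, smul_eq_mul]
  split_ifs with h
  · rw [show c ^ ((p.1 : ℕ) + 1) = c by rw [h, zero_add, pow_one]]
  · simp

theorem aggC_vecMul_blockWeight (c : R) (Ck : Fin (n (k - 1)) → R) :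
    aggC k n Ck ᵥ* blockWeight k n c = c ^ k • aggC k n Ck := by
  ext p
  simp only [blockWeight, vecMul_diagonal, aggC, Pi.smul_apply, smul_eq_mul]
  split_ifs with h
  · rw [show (p.1 : ℕ) + 1 = k by omega, mul_comm]
  · simp

end Aggregated

theorem kpower_transfer_function_vanishes_general (k : ℕ) (n : ℕ → ℕ)
    (A : (j : ℕ) → Matrix (Fin (n j)) (Fin (n j)) ℝ)
    (N : (j : ℕ) → Matrix (Fin (n (j + 1))) (Fin (n j)) ℝ)
    (B1 : Fin (n 0) → ℝ) (Ck : Fin (n (k - 1)) → ℝ)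
    (m : ℕ) (him : m + 1 ≠ k) (s : Fin (m + 1) → ℂ) :
    (fun p => ((aggC k n Ck p : ℝ) : ℂ)) ⬝ᵥ
      (resolventChain ((aggBlockDiag k n A).map (Complex.ofReal))
          ((aggSubDiag k n N).map (Complex.ofReal)) m s).mulVec
        (fun p => ((aggB k n B1 p : ℝ) : ℂ)) = 0 := by
  rw [aggBlockDiag_map A Complex.ofReal_zero, aggSubDiag_map N Complex.ofReal_zero,
    aggB_map B1 Complex.ofReal_zero, aggC_map Ck Complex.ofReal_zero]
  refine dotProduct_mulVec_eq_zero_of_scaling (aggC_vecMul_blockWeight (2 : ℂ) _)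
    (blockWeight_mulVec_aggB 2 _)
    (mul_resolventChain (commute_blockWeight_aggBlockDiag 2 _) (blockWeight_mul_aggSubDiag 2 _)
      m s) ?_
  rw [← pow_succ]
  exact_mod_cast (Nat.pow_right_injective le_rfl).ne him.symm

/-- For the aggregated K-power system matrices, every multivariable transfer function
`H_i(s₁, …, s_i) = C (s_i I − A)⁻¹ N ⋯ N (s₁ I − A)⁻¹ B` with `i ≥ 1`, `i ≠ k`, vanishes,
provided each `s_l I − A` is invertible.  (Here `i = m + 1`.) -/
theorem kpower_transfer_function_vanishes (k : ℕ) (hk : 1 ≤ k) (n : ℕ → ℕ)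
    (A : (j : ℕ) → Matrix (Fin (n j)) (Fin (n j)) ℝ)
    (N : (j : ℕ) → Matrix (Fin (n (j + 1))) (Fin (n j)) ℝ)
    (B1 : Fin (n 0) → ℝ) (Ck : Fin (n (k - 1)) → ℝ)
    (m : ℕ) (him : m + 1 ≠ k) (s : Fin (m + 1) → ℂ)
    (hs : ∀ l : Fin (m + 1),
      IsUnit (s l • (1 : Matrix ((j : Fin k) × Fin (n j)) ((j : Fin k) × Fin (n j)) ℂ) -
        (aggBlockDiag k n A).map (Complex.ofReal))) :
    (fun p => ((aggC k n Ck p : ℝ) : ℂ)) ⬝ᵥ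
      (resolventChain ((aggBlockDiag k n A).map (Complex.ofReal))
          ((aggSubDiag k n N).map (Complex.ofReal)) m s).mulVec
        (fun p => ((aggB k n B1 p : ℝ) : ℂ)) = 0 :=
  kpower_transfer_function_vanishes_general k n A N B1 Ck m him s
end

section
/- Let A ∈ ℝ^{n×n} be Hurwitz, i.e., every eigenvalue of A (as a complex matrix) has negative real part, and let M ∈ ℝ^{n×n}. Then the function t ↦ e^{tA} M e^{tAᵀ} is Bochner integrable on [0, ∞), and the matrix P := ∫₀^∞ e^{tA} M e^{tAᵀ} dt satisfies the Lyapunov equation A P + P Aᵀ + M = 0. -/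
open Matrix MeasureTheory

attribute [local instance] Matrix.linftyOpNormedAddCommGroup Matrix.linftyOpNormedSpace
  Matrix.linftyOpNormedRing Matrix.linftyOpNormedAlgebra

open NormedSpace Filter

namespace LyapunovAux

variable {n : ℕ}

lemma pow_le_aux {c t : ℝ} (hc : 0 < c) (ht : 0 ≤ t) (j : ℕ) :
    t ^ j ≤ (j.factorial : ℝ) * c⁻¹ ^ j * Real.exp (c * t) := by
  have h1 : (c * t) ^ j / (j.factorial : ℝ) ≤ Real.exp (c * t) := by
    calc (c * t) ^ j / (j.factorial : ℝ)
        ≤ ∑ i ∈ Finset.range (j + 1), (c * t) ^ i / (i.factorial : ℝ) :=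
          Finset.single_le_sum (f := fun i => (c * t) ^ i / (i.factorial : ℝ))
            (fun i _ => by positivity) (Finset.self_mem_range_succ j)
      _ ≤ Real.exp (c * t) := Real.sum_le_exp_of_nonneg (by positivity) _
  have hfac : (0 : ℝ) < (j.factorial : ℝ) := by exact_mod_cast j.factorial_pos
  have h2 : (c * t) ^ j ≤ (j.factorial : ℝ) * Real.exp (c * t) := by
    rw [div_le_iff₀ hfac] at h1
    linarith [h1]
  calc t ^ j = c⁻¹ ^ j * (c * t) ^ j := by
        rw [← mul_pow, inv_mul_cancel_left₀ hc.ne']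
    _ ≤ c⁻¹ ^ j * ((j.factorial : ℝ) * Real.exp (c * t)) := by
        apply mul_le_mul_of_nonneg_left h2 (by positivity)
    _ = (j.factorial : ℝ) * c⁻¹ ^ j * Real.exp (c * t) := by ring

lemma vec_decay (B : Matrix (Fin n) (Fin n) ℂ) {c : ℝ} (hc : 0 < c)
    {μ : ℂ} (hμ : μ.re ≤ -(2 * c)) {k : ℕ} {w : Fin n → ℂ}
    (hw : ((B - μ • 1) ^ k) *ᵥ w = 0) :
    ∃ C : ℝ, ∀ t : ℝ, 0 ≤ t →
      ‖(exp ((t : ℂ) • B)) *ᵥ w‖ ≤ C * Real.exp (-(c * t)) := by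
  classical
  set N : Matrix (Fin n) (Fin n) ℂ := B - μ • 1 with hN
  refine ⟨∑ j ∈ Finset.range k, c⁻¹ ^ j * ‖(N ^ j) *ᵥ w‖, fun t ht => ?_⟩
  have hsplit : (t : ℂ) • B = algebraMap ℂ _ ((t : ℂ) * μ) + (t : ℂ) • N := by
    rw [Algebra.algebraMap_eq_smul_one, hN, smul_sub, mul_smul]
    abel
  have hexp : exp ((t : ℂ) • B) = Complex.exp ((t : ℂ) * μ) • exp ((t : ℂ) • N) := by
    rw [hsplit, Matrix.exp_add_of_commute _ _ (Algebra.commute_algebraMap_left _ _),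
      show exp (algebraMap ℂ (Matrix (Fin n) (Fin n) ℂ) ((t : ℂ) * μ))
        = algebraMap ℂ _ (exp ((t : ℂ) * μ)) from (algebraMap_exp_comm _).symm,
      ← Complex.exp_eq_exp_ℂ, ← Algebra.smul_def]
  let L0 : Matrix (Fin n) (Fin n) ℂ →ₗ[ℂ] (Fin n → ℂ) :=
    { toFun := fun X => X *ᵥ w
      map_add' := fun X Y => Matrix.add_mulVec X Y w
      map_smul' := fun z X => Matrix.smul_mulVec z X w }
  let L : Matrix (Fin n) (Fin n) ℂ →L[ℂ] (Fin n → ℂ) := LinearMap.toContinuousLinearMap L0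
  have hLapp : ∀ X : Matrix (Fin n) (Fin n) ℂ, L X = X *ᵥ w := fun X => rfl
  have hNk : ∀ j, k ≤ j → (N ^ j) *ᵥ w = 0 := by
    intro j hj
    rw [← Nat.sub_add_cancel hj, pow_add, ← Matrix.mulVec_mulVec, hw, Matrix.mulVec_zero]
  have hexpN : exp ((t : ℂ) • N) *ᵥ w
      = ∑ j ∈ Finset.range k, (((j.factorial : ℂ))⁻¹ * (t : ℂ) ^ j) • ((N ^ j) *ᵥ w) := by
    rw [← hLapp, NormedSpace.exp_eq_tsum (𝕂 := ℂ)]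
    rw [L.map_tsum (NormedSpace.expSeries_summable' (𝕂 := ℂ) ((t : ℂ) • N))]
    rw [tsum_eq_sum (s := Finset.range k) ?vanish]
    · refine Finset.sum_congr rfl fun j _ => ?_
      rw [smul_pow, _root_.map_smul, _root_.map_smul, hLapp, smul_smul]
    case vanish =>
      intro j hj
      have hkj : k ≤ j := le_of_not_gt (fun h => hj (Finset.mem_range.mpr h))
      rw [smul_pow, _root_.map_smul, _root_.map_smul, hLapp, hNk j hkj, smul_zero, smul_zero]
  rw [hexp, Matrix.smul_mulVec, hexpN, norm_smul]
  have habs : ‖Complex.exp ((t : ℂ) * μ)‖ = Real.exp (t * μ.re) := by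
    rw [Complex.norm_exp]
    congr 1
    simp
  rw [habs]
  have hsum : ‖∑ j ∈ Finset.range k, (((j.factorial : ℂ))⁻¹ * (t : ℂ) ^ j) • ((N ^ j) *ᵥ w)‖
      ≤ ∑ j ∈ Finset.range k, (j.factorial : ℝ)⁻¹ * t ^ j * ‖(N ^ j) *ᵥ w‖ := by
    refine (norm_sum_le _ _).trans (Finset.sum_le_sum fun j _ => ?_)
    rw [norm_smul, norm_mul, norm_inv, norm_pow, Complex.norm_natCast, Complex.norm_real,
      Real.norm_of_nonneg ht]
  calc Real.exp (t * μ.re) * ‖∑ j ∈ Finset.range k, (((j.factorial : ℂ))⁻¹ * (t : ℂ) ^ j) • ((N ^ j) *ᵥ w)‖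
      ≤ Real.exp (t * μ.re) * ∑ j ∈ Finset.range k, (j.factorial : ℝ)⁻¹ * t ^ j * ‖(N ^ j) *ᵥ w‖ :=
        mul_le_mul_of_nonneg_left hsum (Real.exp_nonneg _)
    _ = ∑ j ∈ Finset.range k,
        ((j.factorial : ℝ)⁻¹ * ‖(N ^ j) *ᵥ w‖) * (t ^ j * Real.exp (t * μ.re)) := by
        rw [Finset.mul_sum]
        exact Finset.sum_congr rfl fun j _ => by ring
    _ ≤ ∑ j ∈ Finset.range k,
        ((j.factorial : ℝ)⁻¹ * ‖(N ^ j) *ᵥ w‖) *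
          (((j.factorial : ℝ) * c⁻¹ ^ j * Real.exp (c * t)) * Real.exp (-(2 * c) * t)) := by
        refine Finset.sum_le_sum fun j _ => ?_
        refine mul_le_mul_of_nonneg_left ?_ (by positivity)
        refine mul_le_mul (pow_le_aux hc ht j) ?_ (Real.exp_nonneg _) (by positivity)
        exact Real.exp_le_exp.mpr (by nlinarith)
    _ = (∑ j ∈ Finset.range k, c⁻¹ ^ j * ‖(N ^ j) *ᵥ w‖) * Real.exp (-(c * t)) := by
        rw [Finset.sum_mul]
        refine Finset.sum_congr rfl fun j _ => ?_
        have hfac : ((j.factorial : ℝ)) ≠ 0 := by positivity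
        have hee : Real.exp (c * t) * Real.exp (-(2 * c) * t) = Real.exp (-(c * t)) := by
          rw [← Real.exp_add]; congr 1; ring
        rw [mul_assoc ((j.factorial : ℝ) * c⁻¹ ^ j), hee]
        field_simp
  
lemma norm_le_sum_cols (X : Matrix (Fin n) (Fin n) ℂ) :
    ‖X‖ ≤ ∑ j, ‖X *ᵥ (Pi.single j 1)‖ := by
  have h : ‖X‖₊ ≤ ∑ j, ‖X *ᵥ (Pi.single j 1)‖₊ := by
    rw [Matrix.linfty_opNNNorm_def]
    refine Finset.sup_le fun i _ => Finset.sum_le_sum fun j _ => ?_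
    rw [Matrix.mulVec_single, Pi.nnnorm_def]
    simpa using Finset.le_sup (f := fun i' => ‖X i' j * 1‖₊) (Finset.mem_univ i)
  calc ‖X‖ = ((‖X‖₊ : ℝ)) := rfl
    _ ≤ ((∑ j, ‖X *ᵥ (Pi.single j 1)‖₊ : NNReal) : ℝ) := by exact_mod_cast h
    _ = ∑ j, ‖X *ᵥ (Pi.single j 1)‖ := by push_cast; rfl

lemma matrix_decay (B : Matrix (Fin n) (Fin n) ℂ) {c : ℝ} (hc : 0 < c)
    (hB : ∀ μ ∈ spectrum ℂ B, μ.re ≤ -(2 * c)) :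
    ∃ C : ℝ, ∀ t : ℝ, 0 ≤ t → ‖exp ((t : ℂ) • B)‖ ≤ C * Real.exp (-(c * t)) := by
  classical
  have key : ∀ v : Fin n → ℂ, ∃ C : ℝ, ∀ t : ℝ, 0 ≤ t →
      ‖(exp ((t : ℂ) • B)) *ᵥ v‖ ≤ C * Real.exp (-(c * t)) := by
    intro v
    set f : Module.End ℂ (Fin n → ℂ) := Matrix.toLinAlgEquiv' B with hfdef
    have hv : v ∈ ⨆ μ, f.maxGenEigenspace μ := by
      rw [Module.End.iSup_maxGenEigenspace_eq_top]; trivial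
    rw [Submodule.mem_iSup_iff_exists_finsupp] at hv
    obtain ⟨g, hg, hgsum⟩ := hv
    have each : ∀ μ ∈ g.support, ∃ C : ℝ, ∀ t : ℝ, 0 ≤ t →
        ‖(exp ((t : ℂ) • B)) *ᵥ (g μ)‖ ≤ C * Real.exp (-(c * t)) := by
      intro μ hμs
      obtain ⟨k, hk⟩ := (Module.End.mem_maxGenEigenspace f μ (g μ)).mp (hg μ)
      have hμspec : μ ∈ spectrum ℂ B := by
        rw [← AlgEquiv.spectrum_eq (Matrix.toLinAlgEquiv' (R := ℂ)) B, ← hfdef,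
          ← Module.End.hasEigenvalue_iff_mem_spectrum]
        refine Module.End.hasEigenvalue_of_hasGenEigenvalue (k := k) ?_
        rw [Module.End.hasGenEigenvalue_iff]
        refine (Submodule.ne_bot_iff _).mpr ⟨g μ, ?_, Finsupp.mem_support_iff.mp hμs⟩
        rw [Module.End.mem_genEigenspace_nat, LinearMap.mem_ker, hk]
      have hmat : ((B - μ • 1) ^ k) *ᵥ (g μ) = 0 := by
        have h2 : Matrix.toLinAlgEquiv' ((B - μ • (1 : Matrix (Fin n) (Fin n) ℂ)) ^ k)
            = (f - μ • 1) ^ k := by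
          rw [map_pow, map_sub, _root_.map_smul, _root_.map_one, hfdef]
        have h3 := congrArg (fun (T : Module.End ℂ (Fin n → ℂ)) => T (g μ)) h2
        rw [Matrix.toLinAlgEquiv'_apply] at h3
        rw [h3, hk]
      exact vec_decay B hc (hB μ hμspec) hmat
    choose! C hC using each
    refine ⟨∑ μ ∈ g.support, C μ, fun t ht => ?_⟩
    have hv' : (exp ((t : ℂ) • B)) *ᵥ v
        = ∑ μ ∈ g.support, (exp ((t : ℂ) • B)) *ᵥ (g μ) := by
      conv_lhs => rw [← hgsum]
      rw [Finsupp.sum, ← Matrix.mulVecLin_apply, map_sum]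
      simp [Matrix.mulVecLin_apply]
    rw [hv']
    calc ‖∑ μ ∈ g.support, (exp ((t : ℂ) • B)) *ᵥ (g μ)‖
        ≤ ∑ μ ∈ g.support, ‖(exp ((t : ℂ) • B)) *ᵥ (g μ)‖ := norm_sum_le _ _
      _ ≤ ∑ μ ∈ g.support, C μ * Real.exp (-(c * t)) :=
          Finset.sum_le_sum fun μ hμ => hC μ hμ t ht
      _ = (∑ μ ∈ g.support, C μ) * Real.exp (-(c * t)) := by rw [Finset.sum_mul]
  choose Cv hCv using key
  refine ⟨∑ j, Cv (Pi.single j 1), fun t ht => ?_⟩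
  calc ‖exp ((t : ℂ) • B)‖ ≤ ∑ j, ‖(exp ((t : ℂ) • B)) *ᵥ (Pi.single j 1)‖ :=
        norm_le_sum_cols _
    _ ≤ ∑ j, Cv (Pi.single j 1) * Real.exp (-(c * t)) :=
        Finset.sum_le_sum fun j _ => hCv (Pi.single j 1) t ht
    _ = (∑ j, Cv (Pi.single j 1)) * Real.exp (-(c * t)) := by rw [Finset.sum_mul]

lemma spectrum_transpose (B : Matrix (Fin n) (Fin n) ℂ) :
    spectrum ℂ Bᵀ = spectrum ℂ B := by
  ext μ
  rw [spectrum.mem_iff, spectrum.mem_iff, not_iff_not]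
  have h : algebraMap ℂ (Matrix (Fin n) (Fin n) ℂ) μ - Bᵀ
      = (algebraMap ℂ (Matrix (Fin n) (Fin n) ℂ) μ - B)ᵀ := by
    rw [Matrix.transpose_sub]
    congr 1
    rw [Algebra.algebraMap_eq_smul_one, Matrix.transpose_smul, Matrix.transpose_one]
  rw [h, Matrix.isUnit_iff_isUnit_det, Matrix.det_transpose, ← Matrix.isUnit_iff_isUnit_det]

lemma map_ofReal_exp (X : Matrix (Fin n) (Fin n) ℝ) :
    (exp X).map Complex.ofReal = exp (X.map Complex.ofReal) := by
  have hcont : Continuous (AlgHom.mapMatrix (m := Fin n) Complex.ofRealAm) := by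
    exact LinearMap.continuous_of_finiteDimensional
      (AlgHom.toLinearMap (AlgHom.mapMatrix Complex.ofRealAm))
  have h := map_exp (AlgHom.mapMatrix (m := Fin n) Complex.ofRealAm) hcont X
  rw [AlgHom.mapMatrix_apply, AlgHom.mapMatrix_apply] at h
  rw [show (Complex.ofRealAm : ℝ → ℂ) = Complex.ofReal from rfl] at h
  exact h

lemma norm_map_ofReal (X : Matrix (Fin n) (Fin n) ℝ) :
    ‖X.map Complex.ofReal‖ = ‖X‖ := by
  have h : ‖X.map Complex.ofReal‖₊ = ‖X‖₊ := by
    rw [Matrix.linfty_opNNNorm_def, Matrix.linfty_opNNNorm_def]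
    congr 1
    funext i
    refine Finset.sum_congr rfl fun j _ => ?_
    simp [Matrix.map_apply]
  calc ‖X.map Complex.ofReal‖ = ((‖X.map Complex.ofReal‖₊ : ℝ)) := rfl
    _ = ((‖X‖₊ : ℝ)) := by rw [h]
    _ = ‖X‖ := rfl

lemma real_decay (A : Matrix (Fin n) (Fin n) ℝ) {c : ℝ} (hc : 0 < c)
    (hB : ∀ μ ∈ spectrum ℂ (A.map Complex.ofReal), μ.re ≤ -(2 * c)) :
    ∃ C : ℝ, 0 ≤ C ∧ ∀ t : ℝ, 0 ≤ t → ‖exp (t • A)‖ ≤ C * Real.exp (-(c * t)) := by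
  obtain ⟨C, hC⟩ := matrix_decay (A.map Complex.ofReal) hc hB
  have hmap : ∀ t : ℝ, (t • A).map Complex.ofReal = (t : ℂ) • (A.map Complex.ofReal) := by
    intro t
    ext i j
    simp [Matrix.map_apply]
  have hb : ∀ t : ℝ, 0 ≤ t → ‖exp (t • A)‖ ≤ C * Real.exp (-(c * t)) := by
    intro t ht
    rw [← norm_map_ofReal, map_ofReal_exp, hmap t]
    exact hC t ht
  refine ⟨C, ?_, hb⟩
  have h0 := hb 0 le_rfl
  have := norm_nonneg (exp ((0:ℝ) • A))
  nlinarith [h0, this, Real.exp_pos (-(c * 0))]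

end LyapunovAux

open Filter NormedSpace Topology in
/-- For a Hurwitz matrix `A ∈ ℝ^{n×n}` (all complex eigenvalues have negative real part) and
any `M ∈ ℝ^{n×n}`, the function `t ↦ e^{tA} M e^{tAᵀ}` is Bochner integrable on `[0, ∞)` and
`P := ∫₀^∞ e^{tA} M e^{tAᵀ} dt` satisfies the Lyapunov equation `A P + P Aᵀ + M = 0`. -/
theorem gramian_integral_solves_lyapunov (n : ℕ) (A M : Matrix (Fin n) (Fin n) ℝ)
    (hA : ∀ μ ∈ spectrum ℂ (A.map (Complex.ofReal)), μ.re < 0) :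
    @IntegrableOn _ _ _ _ SeminormedAddGroup.toContinuousENorm
      (fun t : ℝ => NormedSpace.exp (t • A) * M * NormedSpace.exp (t • Aᵀ))
      (Set.Ici (0 : ℝ)) volume ∧
    A * (∫ t in Set.Ici (0 : ℝ),
          NormedSpace.exp (t • A) * M * NormedSpace.exp (t • Aᵀ)) +
      (∫ t in Set.Ici (0 : ℝ),
          NormedSpace.exp (t • A) * M * NormedSpace.exp (t • Aᵀ)) * Aᵀ + M = 0 := by
  classical
  letI : ESeminormedAddMonoid (Matrix (Fin n) (Fin n) ℝ) := by
    exact NormedAddGroup.toENormedAddMonoid.toESeminormedAddMonoid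
  haveI : TopologicalSpace.PseudoMetrizableSpace (Matrix (Fin n) (Fin n) ℝ) :=
    inferInstanceAs (TopologicalSpace.PseudoMetrizableSpace (Fin n → Fin n → ℝ))
  obtain ⟨c, hc, hspec⟩ : ∃ c : ℝ, 0 < c ∧
      ∀ μ ∈ spectrum ℂ (A.map Complex.ofReal), μ.re ≤ -(2 * c) := by
    rcases (spectrum ℂ (A.map Complex.ofReal)).eq_empty_or_nonempty with h | h
    · exact ⟨1, one_pos, by simp [h]⟩
    · obtain ⟨μ₀, hμ₀, hmax⟩ := (spectrum.isCompact (A.map Complex.ofReal)).exists_isMaxOn h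
        (Complex.continuous_re.continuousOn)
      refine ⟨-μ₀.re / 2, by linarith [hA μ₀ hμ₀], fun μ hμ => ?_⟩
      have h2 := hmax hμ
      simp only [Set.mem_setOf_eq] at h2
      linarith [h2]
  have hspecT : ∀ μ ∈ spectrum ℂ (Aᵀ.map Complex.ofReal), μ.re ≤ -(2 * c) := by
    intro μ hμ
    rw [Matrix.transpose_map, LyapunovAux.spectrum_transpose] at hμ
    exact hspec μ hμ
  obtain ⟨C₁, hC₁0, hC₁⟩ := LyapunovAux.real_decay A hc hspec
  obtain ⟨C₂, hC₂0, hC₂⟩ := LyapunovAux.real_decay Aᵀ hc hspecT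
  set f : ℝ → Matrix (Fin n) (Fin n) ℝ :=
    fun t => NormedSpace.exp (t • A) * M * NormedSpace.exp (t • Aᵀ) with hfdef
  set K : ℝ := C₁ * ‖M‖ * C₂ with hK
  have hKnn : 0 ≤ K := by positivity
  have hbound : ∀ t : ℝ, 0 ≤ t → ‖f t‖ ≤ K * Real.exp (-(c * t)) := by
    intro t ht
    have e1 := hC₁ t ht
    have e2 := hC₂ t ht
    have hexple : Real.exp (-(c * t)) ≤ 1 := Real.exp_le_one_iff.mpr (by nlinarith)
    have hexpnn : 0 ≤ Real.exp (-(c * t)) := (Real.exp_pos _).le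
    calc ‖f t‖ ≤ ‖NormedSpace.exp (t • A) * M‖ * ‖NormedSpace.exp (t • Aᵀ)‖ :=
          norm_mul_le _ _
      _ ≤ ‖NormedSpace.exp (t • A)‖ * ‖M‖ * ‖NormedSpace.exp (t • Aᵀ)‖ :=
          mul_le_mul_of_nonneg_right (norm_mul_le _ _) (norm_nonneg _)
      _ ≤ (C₁ * Real.exp (-(c * t))) * ‖M‖ * (C₂ * Real.exp (-(c * t))) := by
          apply mul_le_mul (mul_le_mul_of_nonneg_right e1 (norm_nonneg M)) e2 (norm_nonneg _)
          positivity
      _ = K * (Real.exp (-(c * t)) * Real.exp (-(c * t))) := by rw [hK]; ring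
      _ ≤ K * (1 * Real.exp (-(c * t))) :=
          mul_le_mul_of_nonneg_left (mul_le_mul_of_nonneg_right hexple hexpnn) hKnn
      _ = K * Real.exp (-(c * t)) := by ring
  have hcont : Continuous f := by
    have h1 : Continuous fun t : ℝ => NormedSpace.exp (t • A) := by
      rw [continuous_iff_continuousAt]
      exact fun t => (hasDerivAt_exp_smul_const (𝕂 := ℝ) A t).continuousAt
    have h2 : Continuous fun t : ℝ => NormedSpace.exp (t • Aᵀ) := by
      rw [continuous_iff_continuousAt]
      exact fun t => (hasDerivAt_exp_smul_const (𝕂 := ℝ) Aᵀ t).continuousAt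
    exact (h1.mul continuous_const).mul h2
  have hgint : IntegrableOn (fun t : ℝ => K * Real.exp (-(c * t))) (Set.Ioi (0 : ℝ)) := by
    have := (exp_neg_integrableOn_Ioi 0 hc).const_mul K
    simp only [neg_mul] at this
    exact this
  have hfIoi : IntegrableOn f (Set.Ioi (0 : ℝ)) := by
    refine Integrable.mono' hgint hcont.aestronglyMeasurable.restrict ?_
    filter_upwards [ae_restrict_mem measurableSet_Ioi] with t ht
    exact hbound t (le_of_lt ht)
  have hfIci : IntegrableOn f (Set.Ici (0 : ℝ)) := by
    exact (integrableOn_Ici_iff_integrableOn_Ioi (hb := enorm_ne_top)).mpr hfIoi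
  have hderiv : ∀ t : ℝ, HasDerivAt f (A * f t + f t * Aᵀ) t := by
    intro t
    have h1 : HasDerivAt (fun u : ℝ => NormedSpace.exp (u • A))
        (A * NormedSpace.exp (t • A)) t := hasDerivAt_exp_smul_const' A t
    have h2 : HasDerivAt (fun u : ℝ => NormedSpace.exp (u • Aᵀ))
        (NormedSpace.exp (t • Aᵀ) * Aᵀ) t := hasDerivAt_exp_smul_const Aᵀ t
    have h3 := (h1.mul_const M).mul h2
    convert h3 using 1
    · rfl
    · rfl
    · rfl
    · rfl
    simp only [hfdef]
    noncomm_ring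
  have hgtend : Tendsto (fun t : ℝ => K * Real.exp (-(c * t))) atTop (𝓝 0) := by
    have h4 : Tendsto (fun t : ℝ => Real.exp (c * t)) atTop atTop :=
      Real.tendsto_exp_atTop.comp (Tendsto.const_mul_atTop hc tendsto_id)
    have h5 : Tendsto (fun t : ℝ => (Real.exp (c * t))⁻¹) atTop (𝓝 0) :=
      h4.inv_tendsto_atTop
    have h6 : (fun t : ℝ => K * Real.exp (-(c * t)))
        = fun t => K * (Real.exp (c * t))⁻¹ := by
      funext t; rw [Real.exp_neg]
    rw [h6]
    simpa using h5.const_mul K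
  have hlim : Tendsto f atTop (𝓝 0) :=
    squeeze_zero_norm'
      (by filter_upwards [eventually_ge_atTop (0 : ℝ)] with t ht using hbound t ht) hgtend
  let L1 : Matrix (Fin n) (Fin n) ℝ →L[ℝ] Matrix (Fin n) (Fin n) ℝ :=
    ContinuousLinearMap.mul ℝ (Matrix (Fin n) (Fin n) ℝ) A
  let L2 : Matrix (Fin n) (Fin n) ℝ →L[ℝ] Matrix (Fin n) (Fin n) ℝ :=
    (ContinuousLinearMap.mul ℝ (Matrix (Fin n) (Fin n) ℝ)).flip Aᵀ
  have hint1 : IntegrableOn (fun t => A * f t) (Set.Ioi (0 : ℝ)) := L1.integrable_comp hfIoi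
  have hint2 : IntegrableOn (fun t => f t * Aᵀ) (Set.Ioi (0 : ℝ)) := L2.integrable_comp hfIoi
  have hint' : IntegrableOn (fun t => A * f t + f t * Aᵀ) (Set.Ioi (0 : ℝ)) := by have := hint1.add hint2; exact this
  have key := integral_Ioi_of_hasDerivAt_of_tendsto' (fun t _ => hderiv t) hint' hlim
  have hf0 : f 0 = M := by
    simp only [hfdef, zero_smul, NormedSpace.exp_zero, one_mul, mul_one]
  have hsplit : (∫ t in Set.Ioi (0 : ℝ), (A * f t + f t * Aᵀ))
      = A * (∫ t in Set.Ioi (0 : ℝ), f t) + (∫ t in Set.Ioi (0 : ℝ), f t) * Aᵀ := by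
    rw [integral_add hint1 hint2]
    congr 1
    · exact L1.integral_comp_comm hfIoi
    · exact L2.integral_comp_comm hfIoi
  refine ⟨hfIci, ?_⟩
  have hIci : (∫ t in Set.Ici (0 : ℝ), f t) = ∫ t in Set.Ioi (0 : ℝ), f t :=
    integral_Ici_eq_integral_Ioi
  rw [hIci, ← hsplit, key, hf0]
  simp
end

section
/- (Proposition 1, first formula.) Fix j with 1 ≤ j ≤ k, real numbers λ₁, …, λ_j and μ_j, …, μ_k such that each matrix iλ_l I − A_l (1 ≤ l ≤ j) and each matrix iμ_l I − A_l (j ≤ l ≤ k) is invertible, and λ_j ≠ μ_j, together with positive real weights ρ₁, …, ρ_j and φ_j, …, φ_k; set δ = φ_k ⋯ φ_j · ρ_j ⋯ ρ₁. Define the column chain v_j = (iλ_j I − A_j)⁻¹ N_{j−1} (iλ_{j−1} I − A_{j−1})⁻¹ ⋯ N₁ (iλ₁ I − A₁)⁻¹ B₁ ∈ ℂ^{n_j} and the row chain w_jᵀ = C_k (iμ_k I − A_k)⁻¹ N_{k−1} ⋯ N_j (iμ_j I − A_j)⁻¹ ∈ ℂ^{1×n_j}. Then δ · (w_jᵀ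 v_j) = δ · [ H_k(iμ_k, …, iμ_{j+1}, iμ_j, iλ_{j−1}, …, iλ₁) − H_k(iμ_k, …, iμ_{j+1}, iλ_j, iλ_{j−1}, …, iλ₁) ] / ( i (λ_j − μ_j) ). -/
open Matrix

/-- `subsystemChain n A N B s j = (s_j I − A_j)⁻¹ N_{j-1} (s_{j-1} I − A_{j-1})⁻¹ ⋯
N₀ (s₀ I − A₀)⁻¹ B₁`, the column chain through the subsystem matrices (0-based indices). -/
noncomputable def subsystemChain (n : ℕ → ℕ)
    (A : (j : ℕ) → Matrix (Fin (n j)) (Fin (n j)) ℂ)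
    (N : (j : ℕ) → Matrix (Fin (n (j + 1))) (Fin (n j)) ℂ)
    (B1 : Fin (n 0) → ℂ) (s : ℕ → ℂ) : (j : ℕ) → Fin (n j) → ℂ
  | 0 => ((s 0 • (1 : Matrix (Fin (n 0)) (Fin (n 0)) ℂ) - A 0)⁻¹).mulVec B1
  | j + 1 =>
      ((s (j + 1) • (1 : Matrix (Fin (n (j + 1))) (Fin (n (j + 1))) ℂ) - A (j + 1))⁻¹).mulVec
        ((N j).mulVec (subsystemChain n A N B1 s j))

/-- `rowMidChain n A N s j d = (s_{j+d} I − A_{j+d})⁻¹ N_{j+d-1} ⋯ N_j (s_j I − A_j)⁻¹`,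
the matrix chain from level `j` up to level `j + d`. -/
noncomputable def rowMidChain (n : ℕ → ℕ)
    (A : (j : ℕ) → Matrix (Fin (n j)) (Fin (n j)) ℂ)
    (N : (j : ℕ) → Matrix (Fin (n (j + 1))) (Fin (n j)) ℂ) (s : ℕ → ℂ) (j : ℕ) :
    (d : ℕ) → Matrix (Fin (n (j + d))) (Fin (n j)) ℂ
  | 0 => ((s j • (1 : Matrix (Fin (n j)) (Fin (n j)) ℂ) - A j)⁻¹ :
      Matrix (Fin (n j)) (Fin (n j)) ℂ)
  | d + 1 =>
      (((s (j + d + 1) •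
          (1 : Matrix (Fin (n (j + d + 1))) (Fin (n (j + d + 1))) ℂ) - A (j + d + 1))⁻¹ *
        N (j + d) * rowMidChain n A N s j d : Matrix (Fin (n (j + d + 1))) (Fin (n j)) ℂ))


section Aux

variable {n : ℕ → ℕ} {A : (j : ℕ) → Matrix (Fin (n j)) (Fin (n j)) ℂ}
  {N : (j : ℕ) → Matrix (Fin (n (j + 1))) (Fin (n j)) ℂ}
  {B1 : Fin (n 0) → ℂ} {s s' : ℕ → ℂ}

theorem subsystemChain_congr : ∀ j, (∀ l, l ≤ j → s l = s' l) →
    subsystemChain n A N B1 s j = subsystemChain n A N B1 s' j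
  | 0, h => by simp only [subsystemChain, h 0 le_rfl]
  | j + 1, h => by
      simp only [subsystemChain, h (j + 1) le_rfl,
        subsystemChain_congr j (fun l hl => h l (hl.trans (Nat.le_succ j)))]

theorem rowMidChain_congr (j : ℕ) : ∀ d, (∀ l, j ≤ l → l ≤ j + d → s l = s' l) →
    rowMidChain n A N s j d = rowMidChain n A N s' j d
  | 0, h => by simp only [rowMidChain, h j le_rfl le_rfl]
  | d + 1, h => by
      simp only [rowMidChain, h (j + d + 1) (by omega) (by omega),
        rowMidChain_congr j d (fun l h1 h2 => h l h1 (by omega))]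

theorem subsystemChain_split (j : ℕ)
    (hj : IsUnit (s j • (1 : Matrix (Fin (n j)) (Fin (n j)) ℂ) - A j)) :
    ∀ d, subsystemChain n A N B1 s (j + d) =
      (rowMidChain n A N s j d).mulVec
        ((s j • (1 : Matrix (Fin (n j)) (Fin (n j)) ℂ) - A j).mulVec
          (subsystemChain n A N B1 s j))
  | 0 => by
      rw [rowMidChain, Matrix.mulVec_mulVec,
        Matrix.nonsing_inv_mul _ ((Matrix.isUnit_iff_isUnit_det _).mp hj), Matrix.one_mulVec]
      rfl
  | d + 1 => by
      show subsystemChain n A N B1 s ((j + d) + 1) = _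
      rw [subsystemChain, subsystemChain_split j hj d, rowMidChain,
        Matrix.mulVec_mulVec, Matrix.mulVec_mulVec, Matrix.mulVec_mulVec]

theorem rowMidChain_mul (j : ℕ)
    (hj : IsUnit (s j • (1 : Matrix (Fin (n j)) (Fin (n j)) ℂ) - A j))
    (hj' : IsUnit (s' j • (1 : Matrix (Fin (n j)) (Fin (n j)) ℂ) - A j)) :
    ∀ d, (∀ l, j < l → l ≤ j + d → s l = s' l) →
    rowMidChain n A N s j d * (s j • (1 : Matrix (Fin (n j)) (Fin (n j)) ℂ) - A j) =
    rowMidChain n A N s' j d * (s' j • (1 : Matrix (Fin (n j)) (Fin (n j)) ℂ) - A j)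
  | 0, h => by
      rw [rowMidChain, rowMidChain,
        Matrix.nonsing_inv_mul _ ((Matrix.isUnit_iff_isUnit_det _).mp hj),
        Matrix.nonsing_inv_mul _ ((Matrix.isUnit_iff_isUnit_det _).mp hj')]
  | d + 1, h => by
      rw [rowMidChain, rowMidChain, h (j + d + 1) (by omega) (by omega),
        Matrix.mul_assoc _ (rowMidChain n A N s j d) _,
        Matrix.mul_assoc _ (rowMidChain n A N s' j d) _,
        rowMidChain_mul j hj hj' d (fun l h1 h2 => h l h1 (by omega))]

theorem mulVec_inv_cancel {m : Type*} [Fintype m] [DecidableEq m]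
    (M : Matrix m m ℂ) (h : IsUnit M) (w : m → ℂ) : M.mulVec (M⁻¹.mulVec w) = w := by
  rw [Matrix.mulVec_mulVec, Matrix.mul_nonsing_inv _ ((Matrix.isUnit_iff_isUnit_det _).mp h),
    Matrix.one_mulVec]

theorem kpower_aux (j0 e : ℕ) (Ck : Fin (n (j0 + e)) → ℂ) (δ : ℂ) (sl sm : ℕ → ℂ)
    (hl : ∀ l, l ≤ j0 → IsUnit (sl l • (1 : Matrix (Fin (n l)) (Fin (n l)) ℂ) - A l))
    (hm : ∀ l, j0 ≤ l → l ≤ j0 + e →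
      IsUnit (sm l • (1 : Matrix (Fin (n l)) (Fin (n l)) ℂ) - A l))
    (hc : sl j0 - sm j0 ≠ 0) :
    δ * (Matrix.vecMul Ck (rowMidChain n A N sm j0 e) ⬝ᵥ subsystemChain n A N B1 sl j0) =
    δ * ((Ck ⬝ᵥ subsystemChain n A N B1 (fun l => if l < j0 then sl l else sm l) (j0 + e)) -
         (Ck ⬝ᵥ subsystemChain n A N B1 (fun l => if l ≤ j0 then sl l else sm l) (j0 + e))) /
      (sl j0 - sm j0) := by
  set s1 : ℕ → ℂ := fun l => if l < j0 then sl l else sm l with hs1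
  set s2 : ℕ → ℂ := fun l => if l ≤ j0 then sl l else sm l with hs2
  have e1 : s1 j0 = sm j0 := by simp [hs1]
  have e2 : s2 j0 = sl j0 := by simp [hs2]
  have hlj := hl j0 le_rfl
  have hmj := hm j0 le_rfl (Nat.le_add_right _ _)
  have h1j : IsUnit (s1 j0 • (1 : Matrix (Fin (n j0)) (Fin (n j0)) ℂ) - A j0) := by
    rw [e1]; exact hmj
  have h2j : IsUnit (s2 j0 • (1 : Matrix (Fin (n j0)) (Fin (n j0)) ℂ) - A j0) := by
    rw [e2]; exact hlj
  set v := subsystemChain n A N B1 sl j0 with hv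
  -- feed vectors agree
  have hp1 : (s1 j0 • (1 : Matrix (Fin (n j0)) (Fin (n j0)) ℂ) - A j0).mulVec
        (subsystemChain n A N B1 s1 j0)
      = (sl j0 • (1 : Matrix (Fin (n j0)) (Fin (n j0)) ℂ) - A j0).mulVec v := by
    cases j0 with
    | zero =>
        simp only [hv, subsystemChain]
        rw [mulVec_inv_cancel _ h1j, mulVec_inv_cancel _ hlj]
    | succ j' =>
        have hcg : subsystemChain n A N B1 s1 j' = subsystemChain n A N B1 sl j' :=
          subsystemChain_congr j' (fun l hle => by
            simp [hs1, Nat.lt_succ_of_le hle, not_lt.mpr hle])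
        simp only [hv, subsystemChain, hcg]
        rw [mulVec_inv_cancel _ h1j, mulVec_inv_cancel _ hlj]
  have hp2 : subsystemChain n A N B1 s2 j0 = v :=
    subsystemChain_congr j0 (fun l hle => by simp [hs2, hle])
  have hr1 : rowMidChain n A N s1 j0 e = rowMidChain n A N sm j0 e :=
    rowMidChain_congr j0 e (fun l h1 h2 => by simp [hs1, Nat.not_lt.mpr h1])
  have hr2 : rowMidChain n A N s2 j0 e *
        (s2 j0 • (1 : Matrix (Fin (n j0)) (Fin (n j0)) ℂ) - A j0)
      = rowMidChain n A N sm j0 e *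
        (sm j0 • (1 : Matrix (Fin (n j0)) (Fin (n j0)) ℂ) - A j0) :=
    rowMidChain_mul j0 h2j hmj e (fun l h1 h2 => by
      simp [hs2, Nat.not_le.mpr h1])
  rw [eq_div_iff hc]
  have key : (Matrix.vecMul Ck (rowMidChain n A N sm j0 e) ⬝ᵥ v) * (sl j0 - sm j0) =
      (Ck ⬝ᵥ subsystemChain n A N B1 s1 (j0 + e)) -
      (Ck ⬝ᵥ subsystemChain n A N B1 s2 (j0 + e)) := by
    rw [subsystemChain_split j0 h1j e, subsystemChain_split j0 h2j e, hp1, hp2, hr1,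
      Matrix.mulVec_mulVec, Matrix.mulVec_mulVec, hr2,
      ← dotProduct_sub, ← Matrix.sub_mulVec, ← Matrix.mul_sub,
      sub_sub_sub_cancel_right, ← sub_smul, Matrix.mul_smul, Matrix.smul_mulVec,
      dotProduct_smul, ← Matrix.dotProduct_mulVec]
    simp [mul_comm]
  linear_combination δ * key

end Aux

/-- Proposition 1, first formula.  Here `j = j0 + 1` and `k = j0 + e + 1` (so `1 ≤ j ≤ k`),
`v` is the column chain `v_j` driven by the nodes `iλ_l`, `w` is the row chain `w_jᵀ` driven
by the nodes `iμ_l`, and `δ = φ_k ⋯ φ_j · ρ_j ⋯ ρ₁`.  Then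
`δ (w_jᵀ v_j) = δ [H_k(iμ_k, …, iμ_j, iλ_{j−1}, …, iλ₁) −
H_k(iμ_k, …, iμ_{j+1}, iλ_j, …, iλ₁)] / (i (λ_j − μ_j))`. -/
theorem kpower_prop1_first_formula (n : ℕ → ℕ) (j0 e : ℕ)
    (A : (j : ℕ) → Matrix (Fin (n j)) (Fin (n j)) ℝ)
    (N : (j : ℕ) → Matrix (Fin (n (j + 1))) (Fin (n j)) ℝ)
    (B1 : Fin (n 0) → ℝ) (Ck : Fin (n (j0 + e)) → ℝ)
    (lam mu : ℕ → ℝ)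
    (hlam : ∀ l ≤ j0, IsUnit ((Complex.I * (lam l : ℂ)) •
      (1 : Matrix (Fin (n l)) (Fin (n l)) ℂ) - (A l).map (Complex.ofReal)))
    (hmu : ∀ l, j0 ≤ l → l ≤ j0 + e → IsUnit ((Complex.I * (mu l : ℂ)) •
      (1 : Matrix (Fin (n l)) (Fin (n l)) ℂ) - (A l).map (Complex.ofReal)))
    (hne : lam j0 ≠ mu j0)
    (rho phi : ℕ → ℝ)
    (hrho : ∀ l ≤ j0, 0 < rho l)
    (hphi : ∀ l, j0 ≤ l → l ≤ j0 + e → 0 < phi l) :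
    (((∏ l ∈ Finset.Icc j0 (j0 + e), phi l) * ∏ l ∈ Finset.range (j0 + 1), rho l : ℝ) : ℂ) *
        (Matrix.vecMul (fun i => ((Ck i : ℝ) : ℂ))
            (rowMidChain n (fun j => (A j).map (Complex.ofReal))
              (fun j => (N j).map (Complex.ofReal))
              (fun l => Complex.I * (mu l : ℂ)) j0 e) ⬝ᵥ
          subsystemChain n (fun j => (A j).map (Complex.ofReal))
            (fun j => (N j).map (Complex.ofReal)) (fun i => ((B1 i : ℝ) : ℂ))
            (fun l => Complex.I * (lam l : ℂ)) j0) =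
      (((∏ l ∈ Finset.Icc j0 (j0 + e), phi l) * ∏ l ∈ Finset.range (j0 + 1), rho l : ℝ) : ℂ) *
        (((fun i => ((Ck i : ℝ) : ℂ)) ⬝ᵥ
            subsystemChain n (fun j => (A j).map (Complex.ofReal))
              (fun j => (N j).map (Complex.ofReal)) (fun i => ((B1 i : ℝ) : ℂ))
              (fun l => if l < j0 then Complex.I * (lam l : ℂ) else Complex.I * (mu l : ℂ))
              (j0 + e)) -
          ((fun i => ((Ck i : ℝ) : ℂ)) ⬝ᵥ
            subsystemChain n (fun j => (A j).map (Complex.ofReal))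
              (fun j => (N j).map (Complex.ofReal)) (fun i => ((B1 i : ℝ) : ℂ))
              (fun l => if l ≤ j0 then Complex.I * (lam l : ℂ) else Complex.I * (mu l : ℂ))
              (j0 + e))) /
        (Complex.I * ((lam j0 : ℂ) - (mu j0 : ℂ))) := by
  
  have hc : Complex.I * (lam j0 : ℂ) - Complex.I * (mu j0 : ℂ) ≠ 0 := by
    have : ((lam j0 : ℂ)) - (mu j0 : ℂ) ≠ 0 := by
      rw [sub_ne_zero]
      exact_mod_cast hne
    have heq : Complex.I * (lam j0 : ℂ) - Complex.I * (mu j0 : ℂ) =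
        Complex.I * ((lam j0 : ℂ) - (mu j0 : ℂ)) := by ring
    rw [heq]
    exact mul_ne_zero Complex.I_ne_zero this
  have hdiv : Complex.I * ((lam j0 : ℂ) - (mu j0 : ℂ)) =
      (fun l => Complex.I * (lam l : ℂ)) j0 - (fun l => Complex.I * (mu l : ℂ)) j0 := by
    ring
  rw [hdiv]
  exact kpower_aux j0 e _ _ (fun l => Complex.I * (lam l : ℂ))
    (fun l => Complex.I * (mu l : ℂ)) hlam hmu hc
end
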